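/- arXiv:2310.03451 — 7 statements merged into one kernel-verified Lean document; each statement's English description precedes it below -/
import Mathlib

section
/- The maps γ, δ, and γ∘δ act freely on the fixed-point set of α in T⁸: for every x ∈ T⁸ with α(x) = x, one has γ(x) ≠ x, δ(x) ≠ x, and γ(δ(x)) ≠ x. -/
noncomputable section

/-- The 8-torus `T⁸ = (ℝ/ℤ)⁸`. -/
abbrev Torus8 := Fin 8 → AddCircle (1 : ℝ)

/-- The involution of `T⁸` induced by `α(x) = (−x₁,−x₂,−x₃,−x₄,x₅,x₆,x₇,x₈)`. -/
def torusAlpha : Torus8 → Torus8 := fun x i => if (i : ℕ) < 4 then -x i else x i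

/-- The involution of `T⁸` induced by `γ(x) = (1/2−x₁, 1/2−x₂, x₃, x₄, 1/2−x₅, 1/2−x₆, x₇, x₈)`. -/
def torusGamma : Torus8 → Torus8 := fun x i =>
  if (i : ℕ) = 0 ∨ (i : ℕ) = 1 ∨ (i : ℕ) = 4 ∨ (i : ℕ) = 5 then
    ((1/2 : ℝ) : AddCircle (1 : ℝ)) - x i
  else x i

/-- The involution of `T⁸` induced by `δ(x) = (−x₁, x₂, 1/2−x₃, x₄, 1/2−x₅, x₆, 1/2−x₇, x₈)`. -/
def torusDelta : Torus8 → Torus8 := fun x i =>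
  if (i : ℕ) = 0 then -x i
  else if (i : ℕ) = 2 ∨ (i : ℕ) = 4 ∨ (i : ℕ) = 6 then ((1/2 : ℝ) : AddCircle (1 : ℝ)) - x i
  else x i

lemma half_ne_zero_circle : ((1/2 : ℝ) : AddCircle (1 : ℝ)) ≠ 0 := by
  intro h
  rw [AddCircle.coe_eq_zero_iff] at h
  obtain ⟨n, hn⟩ := h
  have h : (n : ℝ) = 1/2 := by simpa using hn
  have h2 : (2 * n : ℤ) = 1 := by exact_mod_cast (by linarith : (2 * n : ℝ) = 1)
  omega

lemma key1 {G : Type*} [AddCommGroup G] {a b : G} (h1 : -a = a) (h2 : b - a = a) :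
    b = 0 := by
  have hb : b = a + a := eq_add_of_sub_eq h2
  rw [hb]
  nth_rewrite 1 [← h1]
  exact neg_add_cancel a

lemma key2 {G : Type*} [AddCommGroup G] {a b : G} (h2 : b - (-a) = a) : b = 0 := by
  have hb : b + a = 0 + a := by
    rw [zero_add]
    simpa [sub_neg_eq_add] using h2
  exact add_right_cancel hb

/-- `γ`, `δ` and `γ∘δ` act freely on the fixed-point set of `α` in `T⁸`. -/
theorem stmt6 :
    ∀ x : Torus8, torusAlpha x = x →
      torusGamma x ≠ x ∧ torusDelta x ≠ x ∧ torusGamma (torusDelta x) ≠ x := by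
  intro x hα
  have h0 : -x 0 = x 0 := by
    have := congrFun hα 0
    simpa [torusAlpha] using this
  have h2 : -x 2 = x 2 := by
    have := congrFun hα 2
    simpa [torusAlpha] using this
  refine ⟨?_, ?_, ?_⟩
  · intro h
    have hg : ((1/2 : ℝ) : AddCircle (1 : ℝ)) - x 0 = x 0 := by
      have := congrFun h 0
      simpa [torusGamma] using this
    exact half_ne_zero_circle (key1 h0 hg)
  · intro h
    have hd : ((1/2 : ℝ) : AddCircle (1 : ℝ)) - x 2 = x 2 := by
      have := congrFun h 2
      simpa [torusDelta] using this
    exact half_ne_zero_circle (key1 h2 hd)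
  · intro h
    have hgd : ((1/2 : ℝ) : AddCircle (1 : ℝ)) - (-x 0) = x 0 := by
      have := congrFun h 0
      simpa [torusGamma, torusDelta] using this
    exact half_ne_zero_circle (key2 hgd)
end
end

section
/- A point x = (x₁,…,x₈) ∈ T⁸ = (ℝ/ℤ)⁸ is fixed by the involution induced by γ if and only if each of x₁, x₂, x₅, x₆ lies in {1/4, 3/4} mod ℤ (the coordinates x₃, x₄, x₇, x₈ being arbitrary), so the fixed-point set of γ consists of exactly 16 copies of the 4-torus; moreover α, β, and δ act freely on this fixed-point set: for every x with γ(x) = x one has α(x) ≠ x, β(x) ≠ x, and δ(x) ≠ x. -/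
noncomputable section

/-- The involution of `T⁸` induced by `β(x) = (x₁,x₂,x₃,x₄,−x₅,−x₆,−x₇,−x₈)`. -/
def torusBeta : Torus8 → Torus8 := fun x i => if (i : ℕ) < 4 then x i else -x i

namespace Stmt7Aux

local notation "T" => AddCircle (1 : ℝ)

lemma coe_eq_coe {x y : ℝ} : (x : T) = (y : T) ↔ ∃ n : ℤ, y + n = x := by
  rw [← sub_eq_zero, ← AddCircle.coe_sub, AddCircle.coe_eq_zero_iff]
  constructor
  · rintro ⟨n, hn⟩
    refine ⟨n, ?_⟩
    have : (n : ℝ) = x - y := by simpa using hn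
    linarith
  · rintro ⟨n, hn⟩
    exact ⟨n, by simp; linarith⟩

lemma half_ne_zero : ((1/2 : ℝ) : T) ≠ 0 := by
  intro h
  rw [show (0 : T) = ((0:ℝ) : T) by norm_cast, coe_eq_coe] at h
  obtain ⟨n, hn⟩ := h
  have : (2 * n : ℤ) = 1 := by exact_mod_cast (by linarith : (2 * (n:ℝ)) = 1)
  omega

lemma quarter_ne : ((1/4 : ℝ) : T) ≠ ((3/4 : ℝ) : T) := by
  intro h
  rw [coe_eq_coe] at h
  obtain ⟨n, hn⟩ := h
  have : (2 * n : ℤ) = -1 := by exact_mod_cast (by linarith : (2 * (n:ℝ)) = -1)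
  omega

lemma two_eq_half_iff (a : T) :
    a + a = ((1/2 : ℝ) : T) ↔ a = ((1/4 : ℝ) : T) ∨ a = ((3/4 : ℝ) : T) := by
  induction a using QuotientAddGroup.induction_on with
  | H r =>
    show ((r : ℝ) : T) + ((r : ℝ) : T) = _ ↔ _
    rw [← AddCircle.coe_add, coe_eq_coe, coe_eq_coe, coe_eq_coe]
    constructor
    · rintro ⟨n, hn⟩
      rcases Int.even_or_odd n with ⟨k, hk⟩ | ⟨k, hk⟩
      · exact Or.inl ⟨k, by subst hk; push_cast at hn ⊢; linarith⟩
      · exact Or.inr ⟨k, by subst hk; push_cast at hn ⊢; linarith⟩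
    · rintro (⟨n, hn⟩ | ⟨n, hn⟩)
      · exact ⟨2 * n, by push_cast; linarith⟩
      · exact ⟨2 * n + 1, by push_cast; linarith⟩

/-- The set of constrained indices. -/
def P : Fin 8 → Prop := fun i => (i : ℕ) = 0 ∨ (i : ℕ) = 1 ∨ (i : ℕ) = 4 ∨ (i : ℕ) = 5

instance : DecidablePred P := fun i => by unfold P; infer_instance

/-- Coordinatewise condition describing the fixed points of γ. -/
def Q : Fin 8 → T → Prop := fun i a =>
  P i → (a = ((1/4 : ℝ) : T) ∨ a = ((3/4 : ℝ) : T))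

lemma gamma_fixed_iff (x : Torus8) : torusGamma x = x ↔ ∀ i, Q i (x i) := by
  constructor
  · intro h i hPi
    have hI := congrFun h i
    simp only [torusGamma] at hI
    have hPi' : (i : ℕ) = 0 ∨ (i : ℕ) = 1 ∨ (i : ℕ) = 4 ∨ (i : ℕ) = 5 := hPi
    rw [if_pos hPi'] at hI
    rw [sub_eq_iff_eq_add] at hI
    exact (two_eq_half_iff (x i)).mp hI.symm
  · intro h
    funext i
    simp only [torusGamma]
    split_ifs with hPi
    · rcases h i hPi with h' | h'
      · rw [h', ← AddCircle.coe_sub]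
        norm_num
      · rw [h', ← AddCircle.coe_sub, coe_eq_coe]
        exact ⟨-1, by norm_num⟩
    · rfl

lemma homeo_image_cc {X Y : Type*} [TopologicalSpace X] [TopologicalSpace Y]
    (e : X ≃ₜ Y) (x : X) : e '' connectedComponent x = connectedComponent (e x) := by
  apply subset_antisymm
  · exact e.continuous.image_connectedComponent_subset x
  · intro y hy
    have h : e.symm '' connectedComponent (e x) ⊆ connectedComponent (e.symm (e x)) :=
      e.symm.continuous.image_connectedComponent_subset (e x)
    have h2 : e.symm y ∈ connectedComponent x := by
      simpa using h ⟨y, hy, rfl⟩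
    exact ⟨e.symm y, h2, by simp⟩

/-- Connected components in a product of a discrete space and a connected space. -/
lemma cc_prod {X Y : Type*} [TopologicalSpace X] [TopologicalSpace Y]
    [TotallyDisconnectedSpace X] [PreconnectedSpace Y] (l : X) (r : Y) :
    connectedComponent ((l, r) : X × Y) = ({l} : Set X) ×ˢ (Set.univ : Set Y) := by
  apply subset_antisymm
  · intro p hp
    refine ⟨?_, trivial⟩
    have h1 : Prod.fst '' connectedComponent ((l, r) : X × Y) ⊆ connectedComponent l :=
      continuous_fst.image_connectedComponent_subset _
    have := h1 ⟨_, hp, rfl⟩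
    rwa [connectedComponent_eq_singleton] at this
  · apply IsPreconnected.subset_connectedComponent
    · exact isPreconnected_singleton.prod isPreconnected_univ
    · exact ⟨rfl, trivial⟩

/-- The two-point space `{1/4, 3/4} ⊂ T`. -/
abbrev S2 := {a : T // a = ((1/4 : ℝ) : T) ∨ a = ((3/4 : ℝ) : T)}

def boolToS2 : Bool → S2
  | true => ⟨((1/4 : ℝ) : T), Or.inl rfl⟩
  | false => ⟨((3/4 : ℝ) : T), Or.inr rfl⟩

lemma boolToS2_bij : Function.Bijective boolToS2 := by
  constructor
  · intro a b hab
    have h' := congrArg Subtype.val hab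
    cases a <;> cases b
    · rfl
    · exact absurd (h' : ((3/4 : ℝ) : T) = ((1/4 : ℝ) : T)).symm quarter_ne
    · exact absurd (h' : ((1/4 : ℝ) : T) = ((3/4 : ℝ) : T)) quarter_ne
    · rfl
  · rintro ⟨a, h | h⟩
    · exact ⟨true, Subtype.ext h.symm⟩
    · exact ⟨false, Subtype.ext h.symm⟩

instance : Finite S2 := Finite.of_surjective _ boolToS2_bij.2

abbrev L := ∀ _ : {i : Fin 8 // P i}, S2
abbrev R := ∀ _ : {i : Fin 8 // ¬ P i}, T

def QSet : Set Torus8 := {x | ∀ i, Q i (x i)}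

def piSubtypeHomeo : ↥QSet ≃ₜ ∀ i, {a : T // Q i a} where
  toFun x i := ⟨x.1 i, x.2 i⟩
  invFun f := ⟨fun i => (f i).1, fun i => (f i).2⟩
  left_inv _ := rfl
  right_inv _ := rfl
  continuous_toFun := continuous_pi fun i =>
    Continuous.subtype_mk ((continuous_apply i).comp continuous_subtype_val) _
  continuous_invFun := Continuous.subtype_mk
    (continuous_pi fun i => continuous_subtype_val.comp (continuous_apply i)) _

/-- The fixed-point set of `γ` is homeomorphic to `L × R`. -/
def bigHomeo : {x : Torus8 // torusGamma x = x} ≃ₜ L × R :=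
  (Homeomorph.setCongr (show {x : Torus8 | torusGamma x = x} = QSet by
      ext x; exact gamma_fixed_iff x)).trans <|
  piSubtypeHomeo.trans <|
  (Homeomorph.piEquivPiSubtypeProd P (fun _ => {a : T // Q _ a})).trans <|
  Homeomorph.prodCongr
    (Homeomorph.piCongrRight fun i =>
      Homeomorph.setCongr (show {a : T | Q i.1 a} = {a : T | a = ((1/4:ℝ):T) ∨ a = ((3/4:ℝ):T)} by
        ext a; exact ⟨fun h => h i.2, fun h _ => h⟩))
    (Homeomorph.piCongrRight fun i =>
      (Homeomorph.setCongr (show {a : T | Q i.1 a} = Set.univ by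
        ext a; simp only [Set.mem_univ, iff_true, Set.mem_setOf_eq]
        exact fun hP => absurd hP i.2)).trans (Homeomorph.Set.univ T))

def sliceHomeo {X Y : Type*} [TopologicalSpace X] [TopologicalSpace Y] (l : X) :
    ↥(({l} : Set X) ×ˢ (Set.univ : Set Y)) ≃ₜ Y where
  toFun p := p.1.2
  invFun y := ⟨(l, y), ⟨rfl, trivial⟩⟩
  left_inv p := Subtype.ext (Prod.ext p.2.1.symm rfl)
  right_inv _ := rfl
  continuous_toFun := continuous_snd.comp continuous_subtype_val
  continuous_invFun := Continuous.subtype_mk (continuous_const.prodMk continuous_id) _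

/-- Connected components of the fixed-point set are indexed by `L`. -/
def ccEquiv : ConnectedComponents {x : Torus8 // torusGamma x = x} ≃ L := by
  refine Equiv.ofBijective
    ((continuous_fst.comp bigHomeo.continuous).connectedComponentsLift) ⟨?_, ?_⟩
  · intro a b
    obtain ⟨p, rfl⟩ := ConnectedComponents.surjective_coe a
    obtain ⟨q, rfl⟩ := ConnectedComponents.surjective_coe b
    intro h
    rw [Continuous.connectedComponentsLift_apply_coe,
      Continuous.connectedComponentsLift_apply_coe] at h
    rw [eq_comm, ConnectedComponents.coe_eq_coe']
    have hq : bigHomeo q ∈ connectedComponent (bigHomeo p) := by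
      rw [show bigHomeo p = ((bigHomeo p).1, (bigHomeo p).2) from rfl, cc_prod]
      exact ⟨h.symm, trivial⟩
      
    have : bigHomeo.symm (bigHomeo q) ∈ bigHomeo.symm '' connectedComponent (bigHomeo p) :=
      ⟨_, hq, rfl⟩
    rw [homeo_image_cc bigHomeo.symm] at this
    simpa using this
  · intro l
    refine ⟨ConnectedComponents.mk (bigHomeo.symm (l, Classical.arbitrary R)), ?_⟩
    rw [Continuous.connectedComponentsLift_apply_coe]
    simp

/-- Each connected component of the fixed-point set is a 4-torus. -/
def componentHomeo (x : {x : Torus8 // torusGamma x = x}) :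
    ↥(connectedComponent x) ≃ₜ (Fin 4 → T) := by
  refine (bigHomeo.image (connectedComponent x)).trans <|
    (Homeomorph.setCongr ?_).trans <|
    (sliceHomeo (Y := R) ((bigHomeo x).1)).trans <|
    Homeomorph.piCongrLeft (Y := fun _ : Fin 4 => T)
      (Fintype.equivFinOfCardEq (by decide : Fintype.card {i : Fin 8 // ¬ P i} = 4))
  rw [homeo_image_cc, show bigHomeo x = ((bigHomeo x).1, (bigHomeo x).2) from rfl, cc_prod]

end Stmt7Aux

open Stmt7Aux in
/-- A point `x ∈ T⁸` is fixed by `γ` iff each of `x₁, x₂, x₅, x₆` lies in `{1/4, 3/4}` mod `ℤ`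
(the other coordinates being arbitrary), so the fixed-point set of `γ` consists of exactly 16
connected components (copies of the 4-torus); moreover `α`, `β`, `δ` act freely on it. -/
theorem stmt7 :
    (∀ x : Torus8, torusGamma x = x ↔
      ∀ i : Fin 8, ((i : ℕ) = 0 ∨ (i : ℕ) = 1 ∨ (i : ℕ) = 4 ∨ (i : ℕ) = 5) →
        (x i = ((1/4 : ℝ) : AddCircle (1 : ℝ)) ∨ x i = ((3/4 : ℝ) : AddCircle (1 : ℝ)))) ∧
    Nat.card (ConnectedComponents {x : Torus8 // torusGamma x = x}) = 16 ∧
    (∀ x : {x : Torus8 // torusGamma x = x},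
      Nonempty ((connectedComponent x) ≃ₜ (Fin 4 → AddCircle (1 : ℝ)))) ∧
    (∀ x : Torus8, torusGamma x = x →
      torusAlpha x ≠ x ∧ torusBeta x ≠ x ∧ torusDelta x ≠ x) := by
  refine ⟨fun x => gamma_fixed_iff x, ?_, fun x => ⟨componentHomeo x⟩, ?_⟩
  · rw [Nat.card_congr ccEquiv,
      Nat.card_congr (Equiv.arrowCongr (Equiv.refl _) (Equiv.ofBijective _ boolToS2_bij).symm),
      Nat.card_eq_fintype_card]
    decide
  · intro x hx
    have h0 : x 0 + x 0 = ((1/2 : ℝ) : AddCircle (1 : ℝ)) := by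
      have := congrFun hx 0
      simp only [torusGamma] at this
      rw [if_pos (by decide)] at this
      rw [sub_eq_iff_eq_add] at this
      exact this.symm
    have h4 : x 4 + x 4 = ((1/2 : ℝ) : AddCircle (1 : ℝ)) := by
      have := congrFun hx 4
      simp only [torusGamma] at this
      rw [if_pos (by decide)] at this
      rw [sub_eq_iff_eq_add] at this
      exact this.symm
    refine ⟨?_, ?_, ?_⟩
    · intro h
      have := congrFun h 0
      simp only [torusAlpha] at this
      rw [if_pos (by decide)] at this
      have hz : x 0 + x 0 = 0 := by nth_rewrite 1 [← this]; exact neg_add_cancel _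
      exact half_ne_zero (h0.symm.trans hz)
    · intro h
      have := congrFun h 4
      simp only [torusBeta] at this
      rw [if_neg (by decide)] at this
      have hz : x 4 + x 4 = 0 := by nth_rewrite 1 [← this]; exact neg_add_cancel _
      exact half_ne_zero (h4.symm.trans hz)
    · intro h
      have := congrFun h 0
      simp only [torusDelta] at this
      rw [if_pos (by decide)] at this
      have hz : x 0 + x 0 = 0 := by nth_rewrite 1 [← this]; exact neg_add_cancel _
      exact half_ne_zero (h0.symm.trans hz)
end
end

section
/- Let n ≥ 1, let P, Q, R₁, …, R₈ be invertible real n×n matrices, and let g be a nonzero real n×n matrix satisfying Rᵢ·g·Rᵢ⁻¹ = g for all i = 1,…,8, P·g·P⁻¹ = ε₁·g and Q·g·Q⁻¹ = ε₂·g with ε₁, ε₂ ∈ {1, −1} and (ε₁, ε₂) ≠ (1, 1). Then there exists a nonzero element ξ ∈ ⋀²(ℝ⁸) ⊗ Mₙ(ℝ) fixed by all of the maps ⋀²A_α ⊗ id, ⋀²A_β ⊗ id, ⋀²A_γ ⊗ (X ↦ PXP⁻¹), ⋀²A_δ ⊗ (X ↦ QXQ⁻¹), and id ⊗ (X ↦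 RᵢXRᵢ⁻¹) for each i; indeed ξ can be taken of the form e ⊗ g with e ∈ {e₁, e₂, e₃}, choosing e₃ if ε₁ = ε₂ = −1, e₁ if (ε₁, ε₂) = (1, −1), and e₂ if (ε₁, ε₂) = (−1, 1). -/
/-! Each `eₖ` is a sum of four `fᵢ ∧ fⱼ` on which `⋀²diag(s)` acts by one common sign `sᵢsⱼ`, so
`eₖ ⊗ g` is an eigenvector of each of the given maps, with eigenvalue the product of that sign and
`1`, `ε₁` or `ε₂`. The sign table of `e₁, e₂, e₃` under `A_γ, A_δ` is `(1,-1), (-1,1), (-1,-1)`,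
which makes every product `1` for the prescribed choice. Nonvanishing is detected by a
`2 × 2` minor. -/

noncomputable section

open ExteriorAlgebra TensorProduct Matrix

/-- The standard basis vector `fᵢ` of `ℝ⁸`. -/
def fvec (i : Fin 8) : Fin 8 → ℝ := Pi.single i 1

/-- `f_{ij} = fᵢ ∧ fⱼ` in the exterior algebra of `ℝ⁸`. -/
def wdg (i j : Fin 8) : ExteriorAlgebra ℝ (Fin 8 → ℝ) := ι ℝ (fvec i) * ι ℝ (fvec j)

/-- `e₁ = f₁₂+f₃₄+f₅₆+f₇₈` (zero-based indices). -/
def e1 : ExteriorAlgebra ℝ (Fin 8 → ℝ) := wdg 0 1 + wdg 2 3 + wdg 4 5 + wdg 6 7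
/-- `e₂ = f₁₃−f₂₄+f₅₇−f₆₈` (zero-based indices). -/
def e2 : ExteriorAlgebra ℝ (Fin 8 → ℝ) := wdg 0 2 - wdg 1 3 + wdg 4 6 - wdg 5 7
/-- `e₃ = f₁₄+f₂₃+f₅₈+f₆₇` (zero-based indices). -/
def e3 : ExteriorAlgebra ℝ (Fin 8 → ℝ) := wdg 0 3 + wdg 1 2 + wdg 4 7 + wdg 5 6

/-- The diagonal linear map `diag(s)` of `ℝ⁸`. -/
def diagL (s : Fin 8 → ℝ) : (Fin 8 → ℝ) →ₗ[ℝ] (Fin 8 → ℝ) :=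
  LinearMap.pi fun i => s i • LinearMap.proj i

/-- The linear map of the exterior algebra induced by `diag(s)` (so `⋀²diag(s)` on degree-2
elements, satisfying `(⋀L)(u∧v) = Lu ∧ Lv`). -/
def extL (s : Fin 8 → ℝ) :
    ExteriorAlgebra ℝ (Fin 8 → ℝ) →ₗ[ℝ] ExteriorAlgebra ℝ (Fin 8 → ℝ) :=
  (ExteriorAlgebra.map (diagL s)).toLinearMap

/-- Conjugation `X ↦ P·X·P⁻¹` as a linear map on `n×n` matrices. -/
def conjL (n : ℕ) (P : Matrix (Fin n) (Fin n) ℝ) :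
    Matrix (Fin n) (Fin n) ℝ →ₗ[ℝ] Matrix (Fin n) (Fin n) ℝ :=
  (LinearMap.mulLeft ℝ P).comp (LinearMap.mulRight ℝ P⁻¹)

lemma diagL_fvec (s : Fin 8 → ℝ) (k : Fin 8) : diagL s (fvec k) = s k • fvec k := by
  ext k'
  by_cases hk : k' = k <;> simp [diagL, fvec, hk]

lemma extL_wdg (s : Fin 8 → ℝ) (i j : Fin 8) : extL s (wdg i j) = (s i * s j) • wdg i j := by
  simp only [extL, wdg, AlgHom.toLinearMap_apply, map_mul, map_apply_ι, diagL_fvec, map_smul]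
  rw [smul_mul_assoc, mul_smul_comm, smul_smul]

lemma extL_e1 {s : Fin 8 → ℝ} {c : ℝ}
    (h : s 0 * s 1 = c ∧ s 2 * s 3 = c ∧ s 4 * s 5 = c ∧ s 6 * s 7 = c) :
    extL s e1 = c • e1 := by
  obtain ⟨h01, h23, h45, h67⟩ := h
  simp only [e1, map_add, extL_wdg, h01, h23, h45, h67, smul_add]

lemma extL_e2 {s : Fin 8 → ℝ} {c : ℝ}
    (h : s 0 * s 2 = c ∧ s 1 * s 3 = c ∧ s 4 * s 6 = c ∧ s 5 * s 7 = c) :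
    extL s e2 = c • e2 := by
  obtain ⟨h02, h13, h46, h57⟩ := h
  simp only [e2, map_add, map_sub, extL_wdg, h02, h13, h46, h57, smul_add, smul_sub]

lemma extL_e3 {s : Fin 8 → ℝ} {c : ℝ}
    (h : s 0 * s 3 = c ∧ s 1 * s 2 = c ∧ s 4 * s 7 = c ∧ s 5 * s 6 = c) :
    extL s e3 = c • e3 := by
  obtain ⟨h03, h12, h47, h56⟩ := h
  simp only [e3, map_add, extL_wdg, h03, h12, h47, h56, smul_add]

/-- The Plücker coordinate of index `(a, b)` on `⋀²(ℝ⁸)`, extended by zero to the other degrees. -/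
def wedgeCoord (a b : Fin 8) : ExteriorAlgebra ℝ (Fin 8 → ℝ) →ₗ[ℝ] ℝ :=
  liftAlternating (Pi.single 2 (detRowAlternating.compLinearMap (LinearMap.funLeft ℝ ℝ ![a, b])))

lemma wedgeCoord_wdg (a b i j : Fin 8) :
    wedgeCoord a b (wdg i j) = fvec i a * fvec j b - fvec i b * fvec j a := by
  have hwdg : wdg i j = ιMulti ℝ 2 ![fvec i, fvec j] := by
    simp [wdg, ιMulti_apply]
  rw [hwdg, wedgeCoord, liftAlternating_apply_ιMulti, Pi.single_eq_same,
    AlternatingMap.compLinearMap_apply]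
  exact (det_fin_two _).trans (by simp [LinearMap.funLeft])

lemma e1_ne_zero : e1 ≠ 0 := by
  intro h
  simpa [e1, wedgeCoord_wdg, fvec, Pi.single_apply] using congrArg (wedgeCoord 0 1) h

lemma e2_ne_zero : e2 ≠ 0 := by
  intro h
  simpa [e2, wedgeCoord_wdg, fvec, Pi.single_apply] using congrArg (wedgeCoord 0 2) h

lemma e3_ne_zero : e3 ≠ 0 := by
  intro h
  simpa [e3, wedgeCoord_wdg, fvec, Pi.single_apply] using congrArg (wedgeCoord 0 3) h

lemma conjL_apply {n : ℕ} (P g : Matrix (Fin n) (Fin n) ℝ) : conjL n P g = P * g * P⁻¹ := by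
  simp [conjL, mul_assoc]

namespace TensorProduct

variable {R M N : Type*} [CommRing R] [AddCommGroup M] [Module R M] [AddCommGroup N] [Module R N]

lemma tmul_ne_zero [IsDomain R] [Module.Projective R M] [Module.IsTorsionFree R N]
    {m : M} {n : N} (hm : m ≠ 0) (hn : n ≠ 0) : m ⊗ₜ[R] n ≠ 0 := by
  obtain ⟨φ, hφ⟩ := Module.Projective.exists_dual_ne_zero R hm
  intro h
  apply smul_ne_zero hφ hn
  simpa using congrArg (TensorProduct.lid R N ∘ φ.rTensor N) h

lemma map_tmul_eq_self_of_eigen {f : M →ₗ[R] M} {h : N →ₗ[R] N} {m : M} {n : N}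
    {a b : R} (hf : f m = a • m) (hh : h n = b • n) (hab : a * b = 1) :
    map f h (m ⊗ₜ[R] n) = m ⊗ₜ[R] n := by
  rw [map_tmul, hf, hh, smul_tmul_smul, hab, one_smul]

end TensorProduct

lemma exists_two_form_eigen {ε₁ ε₂ : ℝ} (hε₁ : ε₁ = 1 ∨ ε₁ = -1) (hε₂ : ε₂ = 1 ∨ ε₂ = -1)
    (hne : ¬(ε₁ = 1 ∧ ε₂ = 1)) :
    ∃ e ∈ ({e1, e2, e3} : Set (ExteriorAlgebra ℝ (Fin 8 → ℝ))),
      ((ε₁ = -1 ∧ ε₂ = -1) → e = e3) ∧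
      ((ε₁ = 1 ∧ ε₂ = -1) → e = e1) ∧
      ((ε₁ = -1 ∧ ε₂ = 1) → e = e2) ∧
      e ≠ 0 ∧
      extL ![-1,-1,-1,-1,1,1,1,1] e = (1 : ℝ) • e ∧
      extL ![1,1,1,1,-1,-1,-1,-1] e = (1 : ℝ) • e ∧
      extL ![-1,-1,1,1,-1,-1,1,1] e = ε₁ • e ∧
      extL ![-1,1,-1,1,-1,1,-1,1] e = ε₂ • e := by
  rcases hε₁ with rfl | rfl <;> rcases hε₂ with rfl | rfl
  · exact absurd ⟨rfl, rfl⟩ hne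
  · refine ⟨e1, by simp, by norm_num, fun _ => rfl, by norm_num, e1_ne_zero,
      extL_e1 ?_, extL_e1 ?_, extL_e1 ?_, extL_e1 ?_⟩ <;> simp [Matrix.cons_val]
  · refine ⟨e2, by simp, by norm_num, by norm_num, fun _ => rfl, e2_ne_zero,
      extL_e2 ?_, extL_e2 ?_, extL_e2 ?_, extL_e2 ?_⟩ <;> simp [Matrix.cons_val]
  · refine ⟨e3, by simp, fun _ => rfl, by norm_num, by norm_num, e3_ne_zero,
      extL_e3 ?_, extL_e3 ?_, extL_e3 ?_, extL_e3 ?_⟩ <;> simp [Matrix.cons_val]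

theorem stmt11_general (n : ℕ) (P Q : Matrix (Fin n) (Fin n) ℝ)
    (R : Fin 8 → Matrix (Fin n) (Fin n) ℝ)
    (g : Matrix (Fin n) (Fin n) ℝ) (hg : g ≠ 0)
    (ε₁ ε₂ : ℝ) (hε₁ : ε₁ = 1 ∨ ε₁ = -1) (hε₂ : ε₂ = 1 ∨ ε₂ = -1)
    (hne : ¬(ε₁ = 1 ∧ ε₂ = 1))
    (hRg : ∀ i, R i * g * (R i)⁻¹ = g)
    (hPg : P * g * P⁻¹ = ε₁ • g) (hQg : Q * g * Q⁻¹ = ε₂ • g) :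
    ∃ e ∈ ({e1, e2, e3} : Set (ExteriorAlgebra ℝ (Fin 8 → ℝ))),
      ((ε₁ = -1 ∧ ε₂ = -1) → e = e3) ∧
      ((ε₁ = 1 ∧ ε₂ = -1) → e = e1) ∧
      ((ε₁ = -1 ∧ ε₂ = 1) → e = e2) ∧
      e ⊗ₜ[ℝ] g ≠ 0 ∧
      TensorProduct.map (extL ![-1,-1,-1,-1,1,1,1,1]) LinearMap.id (e ⊗ₜ[ℝ] g) = e ⊗ₜ[ℝ] g ∧
      TensorProduct.map (extL ![1,1,1,1,-1,-1,-1,-1]) LinearMap.id (e ⊗ₜ[ℝ] g) = e ⊗ₜ[ℝ] g ∧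
      TensorProduct.map (extL ![-1,-1,1,1,-1,-1,1,1]) (conjL n P) (e ⊗ₜ[ℝ] g) = e ⊗ₜ[ℝ] g ∧
      TensorProduct.map (extL ![-1,1,-1,1,-1,1,-1,1]) (conjL n Q) (e ⊗ₜ[ℝ] g) = e ⊗ₜ[ℝ] g ∧
      (∀ i, TensorProduct.map LinearMap.id (conjL n (R i)) (e ⊗ₜ[ℝ] g) = e ⊗ₜ[ℝ] g) := by
  obtain ⟨e, he, h33, h11, h22, he0, hα, hβ, hγ, hδ⟩ := exists_two_form_eigen hε₁ hε₂ hne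
  refine ⟨e, he, h33, h11, h22, TensorProduct.tmul_ne_zero he0 hg,
    map_tmul_eq_self_of_eigen hα (one_smul ℝ g).symm (mul_one 1),
    map_tmul_eq_self_of_eigen hβ (one_smul ℝ g).symm (mul_one 1),
    map_tmul_eq_self_of_eigen hγ (by rw [conjL_apply, hPg]) (mul_self_eq_one_iff.mpr hε₁),
    map_tmul_eq_self_of_eigen hδ (by rw [conjL_apply, hQg]) (mul_self_eq_one_iff.mpr hε₂),
    fun i => map_tmul_eq_self_of_eigen (one_smul ℝ e).symm
      (by rw [conjL_apply, hRg, one_smul]) (mul_one 1)⟩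

/-- If `g ≠ 0` is centralized by `R₁,…,R₈` and satisfies `PgP⁻¹ = ε₁g`, `QgQ⁻¹ = ε₂g` with
`ε₁,ε₂ ∈ {±1}`, `(ε₁,ε₂) ≠ (1,1)`, then there is a nonzero element `ξ = e ⊗ g` of
`⋀²(ℝ⁸) ⊗ Mₙ(ℝ)` with `e ∈ {e₁,e₂,e₃}` (chosen as `e₃`, `e₁`, `e₂` in the respective sign
cases) fixed by `⋀²A_α ⊗ id`, `⋀²A_β ⊗ id`, `⋀²A_γ ⊗ (X ↦ PXP⁻¹)`, `⋀²A_δ ⊗ (X ↦ QXQ⁻¹)`,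
and `id ⊗ (X ↦ RᵢXRᵢ⁻¹)` for each `i`. -/
theorem stmt11 (n : ℕ) (hn : 1 ≤ n) (P Q : Matrix (Fin n) (Fin n) ℝ)
    (R : Fin 8 → Matrix (Fin n) (Fin n) ℝ)
    (hP : IsUnit P) (hQ : IsUnit Q) (hR : ∀ i, IsUnit (R i))
    (g : Matrix (Fin n) (Fin n) ℝ) (hg : g ≠ 0)
    (ε₁ ε₂ : ℝ) (hε₁ : ε₁ = 1 ∨ ε₁ = -1) (hε₂ : ε₂ = 1 ∨ ε₂ = -1)
    (hne : ¬(ε₁ = 1 ∧ ε₂ = 1))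
    (hRg : ∀ i, R i * g * (R i)⁻¹ = g)
    (hPg : P * g * P⁻¹ = ε₁ • g) (hQg : Q * g * Q⁻¹ = ε₂ • g) :
    ∃ e ∈ ({e1, e2, e3} : Set (ExteriorAlgebra ℝ (Fin 8 → ℝ))),
      ((ε₁ = -1 ∧ ε₂ = -1) → e = e3) ∧
      ((ε₁ = 1 ∧ ε₂ = -1) → e = e1) ∧
      ((ε₁ = -1 ∧ ε₂ = 1) → e = e2) ∧
      e ⊗ₜ[ℝ] g ≠ 0 ∧
      TensorProduct.map (extL ![-1,-1,-1,-1,1,1,1,1]) LinearMap.id (e ⊗ₜ[ℝ] g) = e ⊗ₜ[ℝ] g ∧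
      TensorProduct.map (extL ![1,1,1,1,-1,-1,-1,-1]) LinearMap.id (e ⊗ₜ[ℝ] g) = e ⊗ₜ[ℝ] g ∧
      TensorProduct.map (extL ![-1,-1,1,1,-1,-1,1,1]) (conjL n P) (e ⊗ₜ[ℝ] g) = e ⊗ₜ[ℝ] g ∧
      TensorProduct.map (extL ![-1,1,-1,1,-1,1,-1,1]) (conjL n Q) (e ⊗ₜ[ℝ] g) = e ⊗ₜ[ℝ] g ∧
      (∀ i, TensorProduct.map LinearMap.id (conjL n (R i)) (e ⊗ₜ[ℝ] g) = e ⊗ₜ[ℝ] g) :=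
  stmt11_general n P Q R g hg ε₁ ε₂ hε₁ hε₂ hne hRg hPg hQg
end
end

section
/- Let K = ℤ/2 × ℤ/2 be the Klein four-group, and let S be the set of 5-tuples (g, d, t₄, t₅, t₈) ∈ K⁵ such that not both g and d are the identity and there is no single k ∈ K with {t₄, t₅, t₈} ⊆ {1, k}. The automorphism group Aut(K) (which has order 6) acts on S componentwise, this action is free (the only automorphism fixing a tuple in S is the identity), and the number of orbits of this action is exactly 105. -/
/-- The Klein four-group. -/
abbrev KleinFour := ZMod 2 × ZMod 2

/-- 5-tuples of elements of the Klein four-group. -/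
abbrev Tuple5 := KleinFour × KleinFour × KleinFour × KleinFour × KleinFour

/-- The condition on a tuple `(g, d, t₄, t₅, t₈)`: not both `g` and `d` are the identity, and
there is no single `k` with `{t₄, t₅, t₈} ⊆ {0, k}`. -/
def goodTuple (v : Tuple5) : Prop :=
  ¬(v.1 = 0 ∧ v.2.1 = 0) ∧
  ¬∃ k : KleinFour, (v.2.2.1 = 0 ∨ v.2.2.1 = k) ∧ (v.2.2.2.1 = 0 ∨ v.2.2.2.1 = k) ∧
    (v.2.2.2.2 = 0 ∨ v.2.2.2.2 = k)

/-- The componentwise action of an automorphism of the Klein four-group on a 5-tuple. -/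
def autAct (σ : AddAut KleinFour) (v : Tuple5) : Tuple5 :=
  (σ v.1, σ v.2.1, σ v.2.2.1, σ v.2.2.2.1, σ v.2.2.2.2)

/-!
Two distinct nonzero elements of `K` generate it, so an automorphism other than the identity
fixes at most one nonzero element. A tuple of `S` has two distinct nonzero entries among
`t₄, t₅, t₈`, hence the action on `S` is free, every orbit has 6 elements, and the 630 elements
of `S` fall into 105 orbits.
-/

open AddAction

@[to_additive]
theorem SubMulAction.natCard_orbits {G X : Type*} [Group G] [MulAction G X]
    (p : SubMulAction G X) :
    Nat.card {s : Set X // ∃ x, x ∈ p ∧ s = MulAction.orbit G x} =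
      Nat.card (MulAction.orbitRel.Quotient G p) := by
  let f : p → Set X := fun x => MulAction.orbit G (x : X)
  have hker : Setoid.ker f = MulAction.orbitRel G p := by
    ext x y
    rw [Setoid.ker_def, MulAction.orbit_eq_iff, MulAction.orbitRel_apply,
      SubMulAction.mem_orbit_subMul_iff]
  rw [MulAction.orbitRel.Quotient, ← hker, Nat.card_congr (Setoid.quotientKerEquivRange f)]
  refine Nat.card_congr (Equiv.subtypeEquivRight fun s => ?_)
  exact ⟨fun ⟨x, hx, hs⟩ => ⟨⟨x, hx⟩, hs.symm⟩, fun ⟨x, hs⟩ => ⟨x, x.2, hs.symm⟩⟩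

lemma KleinFour.eq_zero_or_eq_or_eq_or_eq_add (a b : KleinFour) (ha : a ≠ 0) (hb : b ≠ 0)
    (hab : a ≠ b) (x : KleinFour) :
    x = 0 ∨ x = a ∨ x = b ∨ x = a + b := by
  revert a b x; decide

lemma KleinFour.exists_fixed_subset_pair (σ : AddAut KleinFour) (hσ : σ ≠ 0) :
    ∃ k, ∀ x, σ x = x → x = 0 ∨ x = k := by
  by_contra! h
  obtain ⟨a, ha, ha0, -⟩ := h 0
  obtain ⟨b, hb, hb0, hba⟩ := h a
  refine hσ (AddEquiv.ext fun x => ?_)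
  rcases KleinFour.eq_zero_or_eq_or_eq_or_eq_add a b ha0 hb0 hba.symm x with rfl | rfl | rfl | rfl
  · exact map_zero σ
  · exact ha
  · exact hb
  · rw [map_add, ha, hb]; rfl

lemma goodTuple_vadd (σ : AddAut KleinFour) {v : Tuple5} (hv : goodTuple v) :
    goodTuple (σ +ᵥ v) := by
  obtain ⟨hgd, ht⟩ := hv
  refine ⟨fun ⟨hg, hd⟩ => hgd ⟨σ.map_eq_zero_iff.1 hg, σ.map_eq_zero_iff.1 hd⟩, ?_⟩
  rintro ⟨k, h₄, h₅, h₈⟩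
  have pull : ∀ {t : KleinFour}, σ t = 0 ∨ σ t = k → t = 0 ∨ t = σ.symm k := fun h =>
    h.imp σ.map_eq_zero_iff.1 fun h => σ.eq_symm_apply.2 h
  exact ht ⟨σ.symm k, pull h₄, pull h₅, pull h₈⟩

def goodTuples : SubAddAction (AddAut KleinFour) Tuple5 where
  carrier := {v | goodTuple v}
  vadd_mem' σ _ hv := goodTuple_vadd σ hv

lemma eq_zero_of_autAct_eq_self (σ : AddAut KleinFour) (v : Tuple5) (hv : goodTuple v)
    (hσv : autAct σ v = v) : σ = 0 := by
  by_contra hσ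
  obtain ⟨k, hk⟩ := KleinFour.exists_fixed_subset_pair σ hσ
  obtain ⟨g, d, t₄, t₅, t₈⟩ := v
  simp only [autAct, Prod.mk.injEq] at hσv
  exact hv.2 ⟨k, hk _ hσv.2.2.1, hk _ hσv.2.2.2.1, hk _ hσv.2.2.2.2⟩

instance : DecidablePred goodTuple := fun v => by unfold goodTuple; infer_instance

-- 15 choices of `(g, d)` times the 64 - 22 = 42 triples not contained in any `{0, k}`.
set_option maxRecDepth 8000 in
lemma card_goodTuples : Nat.card goodTuples = 630 := by
  change Nat.card {v // goodTuple v} = 630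
  rw [Nat.card_eq_fintype_card]
  decide

lemma card_addAut_kleinFour : Nat.card (AddAut KleinFour) = 6 := by
  rw [Nat.card_eq_fintype_card]; decide

lemma stabilizer_goodTuples_eq_bot (v : goodTuples) : stabilizer (AddAut KleinFour) v = ⊥ :=
  (AddSubgroup.eq_bot_iff_forall _).2 fun σ hσ =>
    eq_zero_of_autAct_eq_self σ v v.2 (congrArg Subtype.val hσ)

/-- `Aut(K)` has order 6, its componentwise action on the set `S` of good tuples is free
(only the identity automorphism fixes a good tuple), and the number of orbits of this action
on `S` is exactly 105. -/
theorem stmt14 :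
    Nat.card (AddAut KleinFour) = 6 ∧
    (∀ σ : AddAut KleinFour, ∀ v : Tuple5, goodTuple v → autAct σ v = v → σ = 0) ∧
    Nat.card {s : Set Tuple5 //
      ∃ v : Tuple5, goodTuple v ∧ s = {w | ∃ σ : AddAut KleinFour, autAct σ v = w}} = 105 := by
  refine ⟨card_addAut_kleinFour, eq_zero_of_autAct_eq_self, ?_⟩
  have hcount : 630 = Nat.card (orbitRel.Quotient (AddAut KleinFour) goodTuples) * 6 := by
    rw [← card_goodTuples, ← card_addAut_kleinFour, ← Nat.card_prod]
    exact Nat.card_congr (selfEquivOrbitsQuotientProd stabilizer_goodTuples_eq_bot)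
  exact (SubAddAction.natCard_orbits goodTuples).trans (by omega)
end

section
/- Let D₁, D₂, D₃ be diagonal real 6×6 matrices whose diagonal entries all lie in {1, −1} and each of which has an even number of entries equal to −1 (so D₁, D₂, D₃ ∈ SO(6)). Then there exist indices i ≠ j such that the k-th matrix has equal (i,i) and (j,j) entries for every k ∈ {1,2,3}; consequently there exists a nonzero skew-symmetric real 6×6 matrix M with Dₖ·M = M·Dₖ for k = 1, 2, 3. -/
/-!
Record for each index `i` the set of `k` with `v k i = -1` as a vector in `(ZMod 2)³`. The evenness
hypotheses say these six vectors sum to `0`. If they were distinct they would miss exactly two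
vectors `a ≠ b` of `(ZMod 2)³`; since all eight vectors also sum to `0`, we would get `a + b = 0`,
i.e. `a = b`. So two indices carry the same pattern, and `E_ij - E_ji` is then a nonzero
skew-symmetric matrix commuting with every `diag (v k)`.
-/

open Matrix

theorem Matrix.commute_diagonal_single {n α : Type*} [DecidableEq n] [Fintype n] [CommSemiring α]
    {d : n → α} {i j : n} (h : d i = d j) (c : α) : Commute (diagonal d) (single i j c) := by
  ext a b
  simp only [diagonal_mul, mul_diagonal, single_apply]
  split_ifs with hab
  · obtain ⟨rfl, rfl⟩ := hab
    rw [h, mul_comm]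
  · simp

theorem Finset.sum_ne_zero_of_card_compl_eq_two {G : Type*} [AddCommGroup G] [Fintype G]
    [DecidableEq G] (hG : ∑ x : G, x = 0) (h2 : ∀ x : G, x + x = 0) {S : Finset G}
    (hS : Sᶜ.card = 2) : ∑ x ∈ S, x ≠ 0 := by
  intro hsum
  obtain ⟨a, b, hab, hSc⟩ := Finset.card_eq_two.mp hS
  have : a + b = 0 := by
    simpa [hSc, hab, hsum, hG] using Finset.sum_compl_add_sum S id
  exact hab (add_right_cancel (this.trans (h2 b).symm))

theorem exists_ne_map_eq_of_sum_eq_zero {ι G : Type*} [Fintype ι] [AddCommGroup G] [Fintype G]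
    [DecidableEq G] (hG : ∑ x : G, x = 0) (h2 : ∀ x : G, x + x = 0)
    (hcard : Fintype.card ι + 2 = Fintype.card G) {f : ι → G} (hf : ∑ i, f i = 0) :
    ∃ i j, i ≠ j ∧ f i = f j := by
  by_contra! hne
  have hinj : Function.Injective f := fun i j hij => by_contra fun h => hne i j h hij
  have hcompl : (Finset.univ.image f)ᶜ.card = 2 := by
    rw [Finset.card_compl, Finset.card_image_of_injective _ hinj, Finset.card_univ]
    omega
  refine Finset.sum_ne_zero_of_card_compl_eq_two hG h2 hcompl ?_
  rwa [Finset.sum_image fun i _ j _ h => hinj h]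

section SignPattern

variable {κ ι R : Type*} [Neg R] [One R] [DecidableEq R]

def signPattern (v : κ → ι → R) (i : ι) : κ → ZMod 2 :=
  fun k => if v k i = -1 then 1 else 0

theorem sum_signPattern_eq_zero [Fintype ι] {v : κ → ι → R}
    (heven : ∀ k, Even (Finset.univ.filter (fun i => v k i = -1)).card) :
    ∑ i, signPattern v i = 0 := by
  funext k
  simp only [Finset.sum_apply, signPattern, Finset.sum_boole, Pi.zero_apply]
  exact (heven k).natCast_zmod_two

theorem apply_eq_of_signPattern_eq {v : κ → ι → R} (hpm : ∀ k i, v k i = 1 ∨ v k i = -1)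
    {i j : ι} (h : signPattern v i = signPattern v j) (k : κ) : v k i = v k j := by
  have hk := congrFun h k
  by_cases hi : v k i = -1 <;> by_cases hj : v k j = -1 <;>
    simp only [signPattern, hi, hj, if_true, if_false, one_ne_zero, zero_ne_one] at hk
  · rw [hi, hj]
  · rw [(hpm k i).resolve_right hi, (hpm k j).resolve_right hj]

end SignPattern

/-- For any three sign vectors `v₁, v₂, v₃ ∈ {1,−1}⁶`, each with an even number of entries
equal to `−1` (so that the corresponding diagonal matrices lie in `SO(6)`), there are indices
`i ≠ j` on which all three vectors agree; consequently there is a nonzero skew-symmetric real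
`6×6` matrix commuting with the three diagonal matrices `diag(vₖ)`. -/
theorem stmt15 (v : Fin 3 → Fin 6 → ℝ)
    (hpm : ∀ k i, v k i = 1 ∨ v k i = -1)
    (heven : ∀ k, Even (Finset.univ.filter (fun i => v k i = -1)).card) :
    (∃ i j : Fin 6, i ≠ j ∧ ∀ k, v k i = v k j) ∧
    (∃ M : Matrix (Fin 6) (Fin 6) ℝ, M ≠ 0 ∧ Mᵀ = -M ∧
      ∀ k, Matrix.diagonal (v k) * M = M * Matrix.diagonal (v k)) := by
  obtain ⟨i, j, hij, hpat⟩ :=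
    exists_ne_map_eq_of_sum_eq_zero (G := Fin 3 → ZMod 2) (by decide) (by decide) (by simp)
      (sum_signPattern_eq_zero heven)
  have hagree := apply_eq_of_signPattern_eq hpm hpat
  refine ⟨⟨i, j, hij, hagree⟩, single i j 1 - single j i 1, fun h => ?_, ?_, fun k => ?_⟩
  · simpa [single_apply, hij] using congrFun (congrFun h i) j
  · rw [transpose_sub, transpose_single, transpose_single, neg_sub]
  · exact ((commute_diagonal_single (hagree k) 1).sub_right
      (commute_diagonal_single (hagree k).symm 1)).eq
end

section
/- Let v₁, v₂, v₃ ∈ {1,−1}⁷ be such that each vₖ has an even number of entries equal to −1 (so the corresponding diagonal matrices lie in SO(7)), and suppose the map i ↦ (v₁(i), v₂(i), v₃(i)) from {1,…,7} to {1,−1}³ is injective. Then each vₖ has exactly four entries equal to −1, and the image of this map is exactly {1,−1}³ ∖ {(1,1,1)}; consequently there is a permutation σ of {1,…,7} such that (v₁∘σ, v₂∘σ, v₃∘σ) = ((−1,−1,−1,−1,1,1,1), (−1,−1,1,1,−1,−1,1), (1,−1,−1,1,1,−1,−1)). -/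
/-!
Record the signs of the `i`-th column of `v` as a vector `f i ∈ 𝔽₂³`, where `true` stands for
`-1`. The seven vectors `f i` are distinct, so they miss exactly one vector `t` of `𝔽₂³`.
Exactly four vectors of `𝔽₂³` have a given coordinate `k` equal to `true`, so row `k` of `v` has
`4 - [t k = true]` entries `-1`. Evenness forces `t = 0`: the columns realise every nonzero sign
pattern once, which gives all three claims.
-/

open Finset Function

theorem Function.Injective.exists_image_univ_eq_erase {α β : Type*} [Fintype α] [Fintype β]
    [DecidableEq β] {f : α → β} (hf : Injective f)
    (hcard : Fintype.card β = Fintype.card α + 1) :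
    ∃ t, univ.image f = univ.erase t := by
  have hcompl : #(univ \ univ.image f) = 1 := by
    rw [card_sdiff_of_subset (subset_univ _), card_image_of_injective _ hf, card_univ, card_univ,
      hcard, Nat.add_sub_cancel_left]
  obtain ⟨t, ht⟩ := card_eq_one.mp hcompl
  refine ⟨t, ?_⟩
  rw [← sdiff_singleton_eq_erase, ← ht, Finset.sdiff_sdiff_eq_self (subset_univ _)]

theorem Function.Injective.card_filter_comp_of_image_eq_erase {α β : Type*} [Fintype α]
    [Fintype β] [DecidableEq β] {f : α → β} (hf : Injective f) {t : β}
    (ht : univ.image f = univ.erase t) (p : β → Prop) [DecidablePred p] :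
    #{i | p (f i)} = #((univ.filter p).erase t) := by
  rw [← filter_erase, ← ht, filter_image, card_image_of_injective _ hf]

theorem Function.Injective.exists_perm_comp_eq_of_image_univ_eq {α β : Type*} [Fintype α]
    [DecidableEq β] {f g : α → β} (hf : Injective f) (hg : Injective g)
    (h : univ.image g = univ.image f) : ∃ σ : Equiv.Perm α, f ∘ σ = g := by
  have hrange : Set.range g = Set.range f := by
    simpa only [coe_image, coe_univ, Set.image_univ] using congrArg ((↑) : Finset β → Set β) h
  exact ⟨((Equiv.ofInjective g hg).trans (Equiv.setCongr hrange)).trans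
    (Equiv.ofInjective f hf).symm, funext fun _ => Equiv.apply_ofInjective_symm hf _⟩

theorem card_filter_apply_eq {ι α : Type*} [Fintype ι] [DecidableEq ι] [Fintype α]
    [DecidableEq α] (k : ι) (a : α) :
    #{g : ι → α | g k = a} = Fintype.card α ^ (Fintype.card ι - 1) := by
  simpa using Fintype.card_filter_piFinset_const_eq_of_mem univ k (mem_univ a)

section BoolVectors

variable {α ι : Type*} [Fintype α] [Fintype ι] [DecidableEq ι] {f : α → ι → Bool}

theorem image_eq_erase_zero_of_even_card_filter (hf : Injective f)
    (hcard : 2 ^ Fintype.card ι = Fintype.card α + 1) (hι : 2 ≤ Fintype.card ι)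
    (heven : ∀ k, Even #{i | f i k = true}) :
    univ.image f = univ.erase fun _ => false := by
  obtain ⟨t, ht⟩ := hf.exists_image_univ_eq_erase (by simpa using hcard)
  suffices t = fun _ => false by rwa [← this]
  funext k
  by_contra htk
  have hodd := heven k
  rw [hf.card_filter_comp_of_image_eq_erase ht (· k = true),
    card_erase_of_mem (by simpa using htk), card_filter_apply_eq, Fintype.card_bool,
    Nat.even_sub (Nat.one_le_two_pow)] at hodd
  exact Nat.not_even_one (hodd.mp ((Nat.even_pow' (by omega)).mpr even_two))

theorem card_filter_apply_eq_true_of_image_eq_erase_zero (hf : Injective f)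
    (himage : univ.image f = univ.erase fun _ => false) (k : ι) :
    #{i | f i k = true} = 2 ^ (Fintype.card ι - 1) := by
  rw [hf.card_filter_comp_of_image_eq_erase himage (· k = true),
    erase_eq_of_notMem (by simp), card_filter_apply_eq, Fintype.card_bool]

end BoolVectors

section SignVectors

variable {κ : Type*}

def IsSignVector (x : κ → ℝ) : Prop := ∀ k, x k = 1 ∨ x k = -1

noncomputable def negPattern (x : κ → ℝ) : κ → Bool := fun k => decide (x k = -1)

theorem negPattern_injOn : Set.InjOn (negPattern (κ := κ)) {x | IsSignVector x} := by
  intro x hx y hy hxy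
  funext k
  have hk := congrFun hxy k
  simp only [negPattern, decide_eq_decide] at hk
  rcases hx k with h | h <;> rcases hy k with h' | h' <;> simp only [h, h'] at hk ⊢ <;>
    norm_num at hk

theorem negPattern_eq_zero_iff {x : κ → ℝ} (hx : IsSignVector x) :
    negPattern x = (fun _ => false) ↔ x = fun _ => 1 := by
  have hone : negPattern (fun _ : κ => (1 : ℝ)) = fun _ => false := by
    funext k
    norm_num [negPattern]
  exact ⟨fun h => negPattern_injOn hx (fun _ => Or.inl rfl) (h.trans hone.symm),
    fun h => h ▸ hone⟩

end SignVectors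

def standardSignColumns : Fin 7 → Fin 3 → ℝ := fun i =>
  ![![-1, -1, -1, -1, 1, 1, 1] i, ![-1, -1, 1, 1, -1, -1, 1] i, ![1, -1, -1, 1, 1, -1, -1] i]

theorem isSignVector_standardSignColumns (i : Fin 7) : IsSignVector (standardSignColumns i) := by
  intro k
  fin_cases i <;> fin_cases k <;> norm_num [standardSignColumns]

theorem negPattern_comp_standardSignColumns : negPattern ∘ standardSignColumns = fun i =>
    ![![true, true, true, true, false, false, false] i,
      ![true, true, false, false, true, true, false] i,
      ![false, true, true, false, false, true, true] i] := by
  funext i k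
  fin_cases i <;> fin_cases k <;> norm_num [standardSignColumns, negPattern]

theorem exists_perm_columns_eq_standardSignColumns {v : Fin 3 → Fin 7 → ℝ}
    (hv : ∀ i, IsSignVector fun k => v k i) (hf : Injective fun i => negPattern fun k => v k i)
    (himage : univ.image (fun i => negPattern fun k => v k i) = univ.erase fun _ => false) :
    ∃ σ : Equiv.Perm (Fin 7), ∀ i, (fun k => v k (σ i)) = standardSignColumns i := by
  obtain ⟨σ, hσ⟩ := hf.exists_perm_comp_eq_of_image_univ_eq
    (g := negPattern ∘ standardSignColumns)
    (by rw [negPattern_comp_standardSignColumns]; decide)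
    (by rw [negPattern_comp_standardSignColumns, himage]; decide)
  exact ⟨σ, fun i =>
    negPattern_injOn (hv (σ i)) (isSignVector_standardSignColumns i) (congrFun hσ i)⟩

/-- If `v₁, v₂, v₃ ∈ {1,−1}⁷` each have an even number of entries equal to `−1` and the
sign-triple map `i ↦ (v₁(i), v₂(i), v₃(i))` is injective, then each `vₖ` has exactly four
entries equal to `−1`, the image of the sign-triple map is `{1,−1}³ ∖ {(1,1,1)}`, and up to a
permutation of the seven indices the triple `(v₁, v₂, v₃)` equals
`((−1,−1,−1,−1,1,1,1), (−1,−1,1,1,−1,−1,1), (1,−1,−1,1,1,−1,−1))`. -/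
theorem stmt17 (v : Fin 3 → Fin 7 → ℝ)
    (hpm : ∀ k i, v k i = 1 ∨ v k i = -1)
    (heven : ∀ k, Even (Finset.univ.filter (fun i => v k i = -1)).card)
    (hinj : Function.Injective (fun i : Fin 7 => fun k : Fin 3 => v k i)) :
    (∀ k, (Finset.univ.filter (fun i => v k i = -1)).card = 4) ∧
    (∀ w : Fin 3 → ℝ, (∀ k, w k = 1 ∨ w k = -1) → w ≠ (fun _ => 1) →
      ∃ i : Fin 7, ∀ k, v k i = w k) ∧
    (∃ σ : Equiv.Perm (Fin 7), ∀ i : Fin 7,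
      v 0 (σ i) = ![-1, -1, -1, -1, 1, 1, 1] i ∧
      v 1 (σ i) = ![-1, -1, 1, 1, -1, -1, 1] i ∧
      v 2 (σ i) = ![1, -1, -1, 1, 1, -1, -1] i) := by
  have hcol : ∀ i, IsSignVector fun k => v k i := fun i k => hpm k i
  set f : Fin 7 → Fin 3 → Bool := fun i => negPattern fun k => v k i
  have hf : Injective f := fun i j h => hinj (negPattern_injOn (hcol i) (hcol j) h)
  have hrow : ∀ k, #{i | v k i = -1} = #{i | f i k = true} := fun k => by
    simp only [f, negPattern, decide_eq_true_eq]
  have himage : univ.image f = univ.erase fun _ => false :=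
    image_eq_erase_zero_of_even_card_filter hf (by simp) (by simp) fun k => hrow k ▸ heven k
  refine ⟨fun k => ?_, fun w hw hw1 => ?_, ?_⟩
  · rw [hrow, card_filter_apply_eq_true_of_image_eq_erase_zero hf himage]
    simp
  · have hwf : negPattern w ∈ univ.image f := by
      simpa [himage] using (negPattern_eq_zero_iff hw).not.mpr hw1
    obtain ⟨i, -, hi⟩ := mem_image.mp hwf
    exact ⟨i, congrFun (negPattern_injOn (hcol i) hw hi)⟩
  · obtain ⟨σ, hσ⟩ := exists_perm_columns_eq_standardSignColumns hcol hf himage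
    exact ⟨σ, fun i => ⟨congrFun (hσ i) 0, congrFun (hσ i) 1, congrFun (hσ i) 2⟩⟩
end

section
/- Let n ≥ 3 and let g, d ∈ O(n) be involutions (g² = d² = I) whose commutator t := g·d·g⁻¹·d⁻¹ is not the identity, and let t₁, …, t₈ ∈ O(n) be pairwise commuting involutions, each commuting with both g and d, with t₁ = t. Then there exists a nonzero skew-symmetric real n×n matrix M such that g·M·g⁻¹ = −M, d·M·d⁻¹ = −M, and tᵢ·M·tᵢ⁻¹ = M for all i = 1, …, 8. -/
open Matrix

/-- Let `g, d` be orthogonal involutions of `ℝⁿ` (`n ≥ 3`) whose commutator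
`t = g·d·g⁻¹·d⁻¹` is not the identity, and let `t₁, …, t₈` be pairwise commuting orthogonal
involutions, each commuting with `g` and `d`, with `t₁ = t`. Then there is a nonzero
skew-symmetric matrix `M` with `g·M·g⁻¹ = −M`, `d·M·d⁻¹ = −M`, and `tᵢ·M·tᵢ⁻¹ = M` for all
`i`. (Here `t 0 = t₁, …, t 7 = t₈`.) -/
theorem stmt19 (n : ℕ) (hn : 3 ≤ n) (g d : Matrix (Fin n) (Fin n) ℝ)
    (hgO : gᵀ * g = 1) (hdO : dᵀ * d = 1)
    (hg2 : g * g = 1) (hd2 : d * d = 1)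
    (hne : g * d * g⁻¹ * d⁻¹ ≠ 1)
    (t : Fin 8 → Matrix (Fin n) (Fin n) ℝ)
    (htO : ∀ i, (t i)ᵀ * t i = 1) (ht2 : ∀ i, t i * t i = 1)
    (htcomm : ∀ i j, t i * t j = t j * t i)
    (htg : ∀ i, t i * g = g * t i) (htd : ∀ i, t i * d = d * t i)
    (ht1 : t 0 = g * d * g⁻¹ * d⁻¹) :
    ∃ M : Matrix (Fin n) (Fin n) ℝ, M ≠ 0 ∧ Mᵀ = -M ∧
      g * M * g⁻¹ = -M ∧ d * M * d⁻¹ = -M ∧ ∀ i, t i * M * (t i)⁻¹ = M := by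
  have hginv : g⁻¹ = g := inv_eq_right_inv hg2
  have hdinv : d⁻¹ = d := inv_eq_right_inv hd2
  have htinv : ∀ i, (t i)⁻¹ = t i := fun i => inv_eq_right_inv (ht2 i)
  -- g, d, t i are symmetric
  have hgs : gᵀ = g := by
    have := congrArg (· * g) hgO
    simpa [mul_assoc, hg2] using this
  have hds : dᵀ = d := by
    have := congrArg (· * d) hdO
    simpa [mul_assoc, hd2] using this
  have hnc : g * d ≠ d * g := by
    intro h
    apply hne
    rw [hginv, hdinv]
    calc g * d * g * d = d * g * g * d := by rw [h]
    _ = 1 := by rw [mul_assoc d g, hg2, mul_one, hd2]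
  refine ⟨g * d - d * g, ?_, ?_, ?_, ?_, ?_⟩
  · intro h
    exact hnc (by linear_combination (norm := abel) h)
  · rw [transpose_sub, transpose_mul, transpose_mul, hgs, hds]
    abel
  · rw [hginv, mul_sub, sub_mul]
    rw [show g * (g * d) * g = d * g by rw [← mul_assoc, hg2, one_mul]]
    rw [show g * (d * g) * g = g * d by rw [mul_assoc, mul_assoc, hg2, mul_one]]
    abel
  · rw [hdinv, mul_sub, sub_mul]
    rw [show d * (g * d) * d = d * g by rw [mul_assoc, mul_assoc, hd2, mul_one]]
    rw [show d * (d * g) * d = g * d by rw [← mul_assoc, hd2, one_mul]]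
    abel
  · intro i
    rw [htinv, mul_sub, sub_mul]
    rw [show t i * (g * d) * t i = g * d * (t i * t i) by
      rw [← mul_assoc, htg, mul_assoc g, htd, ← mul_assoc, mul_assoc]]
    rw [show t i * (d * g) * t i = d * g * (t i * t i) by
      rw [← mul_assoc, htd, mul_assoc d, htg, ← mul_assoc, mul_assoc]]
    rw [ht2 i, mul_one, mul_one]
end
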